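/- For a finite sequence I of positive integers, define χ'(S_I) := Σ_{I' ∈ C(I^{-1})} S_{I'} in 𝓕₂*, where I^{-1} is the reversal of I, and χ'(S_{()}) := S_{()}. Then for every nonempty sequence I = (i_1,…,i_n) of positive integers, Σ_{k=0}^{n} S_{(i_1,…,i_k)} · χ'(S_{(i_{k+1},…,i_n)}) = 0 in 𝓕₂*. (That is, χ' is the conjugation/antipode of the mod 2 dual Leibniz–Hopf algebra.) -/

import Mathlib

/-- The overlapping shuffle product of two finite sequences, as a multiset
(counting multiplicities). -/
def osp : List ℕ → List ℕ → Multiset (List ℕ)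
  | A, [] => {A}
  | [], B => {B}
  | a :: A, b :: B =>
      ((osp A (b :: B)).map (a :: ·)) +
      ((osp (a :: A) B).map (b :: ·)) +
      ((osp A B).map ((a + b) :: ·))
termination_by A B => A.length + B.length
decreasing_by all_goals (simp only [List.length_cons]; omega)

/-- The underlying free module over `ZMod 2` on the set of finite sequences
(this carries the mod 2 dual Leibniz--Hopf algebra `𝓕₂*`). -/
abbrev F2D : Type := (List ℕ) →₀ ZMod 2

/-- The basis element `S_I`. -/
noncomputable def sElem (I : List ℕ) : F2D := Finsupp.single I 1

/-- The element of `𝓕₂*` associated to a multiset of sequences, keeping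
multiplicities mod 2. -/
noncomputable def ofMS (m : Multiset (List ℕ)) : F2D := (m.map sElem).sum

/-- The bilinear product of `𝓕₂*`: on basis elements,
`S_I · S_J = Σ_K (multiplicity of K in osp I J mod 2) • S_K`. -/
noncomputable def fmul (x y : F2D) : F2D :=
  x.sum fun I a => y.sum fun J b => (a * b) • ofMS (osp I J)

/-- The coarsening set `C(I)`: all sequences obtained from `I` by summing
consecutive blocks of entries.  (`C([]) = {[]}` by convention.) -/
def coars : List ℕ → Finset (List ℕ)
  | [] => {[]}
  | [i] => {[i]}
  | i :: j :: rest =>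
      ((coars (j :: rest)).image (i :: ·)) ∪
      ((coars (j :: rest)).image (fun I' => (i + I'.headD 0) :: I'.tail))

/-- `χ'(S_I) = Σ_{I' ∈ C(I⁻¹)} S_{I'}` in `𝓕₂*`, where `I⁻¹` is the reversal
of `I` (with `χ'(S_{()}) = S_{()}`). -/
noncomputable def chiS (I : List ℕ) : F2D := ∑ I' ∈ coars I.reverse, sElem I'

/-!
Write `Q_k = S_{(i_1,…,i_k)} · χ'(S_{(i_{k+1},…,i_n)})` and sort the terms of `Q_k` by their last
entry. For `0 < k < n` that entry is either the last block of the coarsening `J` of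
`(i_n,…,i_{k+1})` on its own, or it contains `i_k`. Terms of the second kind are exactly the
terms of `Q_{k-1}` of the first kind, read through the map sending a coarsening `J` of
`(i_n,…,i_{k+1})` to `J` with `i_k` appended or added to its last block, which is a bijection
onto the coarsenings of `(i_n,…,i_k)` because the entries are positive. With `E_k` the terms of
the first kind in `Q_k`, this gives `Q_k = E_k + E_{k-1}`, `Q_0 = E_0` and `Q_n = S_I = E_{n-1}`,
so the sum is `2 Σ_k E_k = 0`.
-/

theorem osp_nil_right (A : List ℕ) : osp A [] = {A} := by simp [osp]

theorem osp_nil_left (B : List ℕ) : osp [] B = {B} := by cases B <;> simp [osp]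

theorem osp_cons_cons (a b : ℕ) (A B : List ℕ) : osp (a :: A) (b :: B) =
    (osp A (b :: B)).map (a :: ·) + (osp (a :: A) B).map (b :: ·) +
      (osp A B).map ((a + b) :: ·) := by
  rw [osp]

theorem osp_append_singleton (A B : List ℕ) (a b : ℕ) :
    osp (A ++ [a]) (B ++ [b]) =
      (osp (A ++ [a]) B).map (· ++ [b]) + (osp A (B ++ [b])).map (· ++ [a]) +
        (osp A B).map (· ++ [a + b]) := by
  induction A generalizing B with
  | nil =>
    induction B with
    | nil => simp [osp_cons_cons, osp_nil_left, osp_nil_right]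
    | cons b' B ih =>
      simp only [List.nil_append, List.cons_append] at ih ⊢
      rw [osp_cons_cons, osp_cons_cons, ih]
      simp only [osp_nil_left, Multiset.map_add, Multiset.map_map, Function.comp_def,
        Multiset.map_singleton, List.cons_append]
      abel
  | cons a' A ih =>
    induction B with
    | nil =>
      have h := ih []
      simp only [List.nil_append, List.cons_append, osp_nil_right] at h ⊢
      rw [osp_cons_cons, osp_cons_cons, h]
      simp only [osp_nil_right, Multiset.map_add, Multiset.map_map,
        Function.comp_def, Multiset.map_singleton, List.cons_append]
      abel
    | cons b' B ihB =>
      have h₁ := ih (b' :: B)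
      have h₂ := ih B
      simp only [List.cons_append] at h₁ ihB ⊢
      rw [osp_cons_cons, osp_cons_cons, osp_cons_cons, osp_cons_cons, h₁, h₂, ihB]
      simp only [Multiset.map_add, Multiset.map_map, Function.comp_def, List.cons_append]
      abel

theorem coars_cons (i : ℕ) {D : List ℕ} (hD : D ≠ []) :
    coars (i :: D) = (coars D).image (i :: ·) ∪
      (coars D).image (fun K => (i + K.headD 0) :: K.tail) := by
  obtain ⟨j, D, rfl⟩ := List.exists_cons_of_ne_nil hD
  rfl

theorem ne_nil_of_mem_coars {D K : List ℕ} (hD : D ≠ []) (hK : K ∈ coars D) : K ≠ [] := by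
  induction D generalizing K with
  | nil => exact absurd rfl hD
  | cons i D ih =>
    rcases eq_or_ne D [] with rfl | hD'
    · simp_all [coars]
    · rw [coars_cons i hD'] at hK
      aesop

theorem pos_of_mem_coars {D K : List ℕ} (hD : ∀ d ∈ D, 0 < d) (hK : K ∈ coars D) :
    ∀ k ∈ K, 0 < k := by
  induction D generalizing K with
  | nil => simp_all [coars]
  | cons i D ih =>
    rcases eq_or_ne D [] with rfl | hD'
    · simp_all [coars]
    · rw [coars_cons i hD'] at hK
      simp only [List.mem_cons, forall_eq_or_imp] at hD
      simp only [Finset.mem_union, Finset.mem_image] at hK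
      rcases hK with ⟨K, hK, rfl⟩ | ⟨K, hK, rfl⟩
      · simpa [hD.1] using ih hD.2 hK
      · intro k hk
        rcases List.mem_cons.1 hk with rfl | hk
        · omega
        · exact ih hD.2 hK k (List.mem_of_mem_tail hk)

theorem List.modifyLast_singleton {α : Type*} (f : α → α) (x : α) : [x].modifyLast f = [f x] :=
  List.modifyLast_concat f x []

theorem List.modifyLast_cons_of_ne_nil {α : Type*} (f : α → α) (x : α) {L : List α}
    (hL : L ≠ []) : (x :: L).modifyLast f = x :: L.modifyLast f :=
  List.modifyLast_append_of_right_ne_nil f [x] L hL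

theorem coars_append_singleton {D : List ℕ} (hD : D ≠ []) (a : ℕ) :
    coars (D ++ [a]) =
      (coars D).image (· ++ [a]) ∪ (coars D).image (List.modifyLast (· + a)) := by
  induction D with
  | nil => exact absurd rfl hD
  | cons d D ih =>
    rcases eq_or_ne D [] with rfl | hD'
    · simp [coars, List.modifyLast_singleton]
    have hne : ∀ K ∈ coars D, K ≠ [] := fun K hK => ne_nil_of_mem_coars hD' hK
    rw [List.cons_append, coars_cons d (by simp), coars_cons d hD', ih hD']
    simp only [Finset.image_union, Finset.image_image]
    rw [Finset.union_union_union_comm]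
    congr 2 <;> apply Finset.image_congr <;> intro K hK <;>
      obtain ⟨k, K, rfl⟩ := List.exists_cons_of_ne_nil (hne K hK) <;>
      simp only [Function.comp_apply]
    · rfl
    · exact (List.modifyLast_cons_of_ne_nil _ d (List.cons_ne_nil k K)).symm
    · rcases eq_or_ne K [] with rfl | hK'
      · simp [List.modifyLast_singleton, Nat.add_assoc]
      · simp [List.modifyLast_cons_of_ne_nil _ _ hK']

theorem exists_eq_append_singleton_pos_of_mem_coars {D K : List ℕ} (hD : D ≠ [])
    (hpos : ∀ d ∈ D, 0 < d) (hK : K ∈ coars D) : ∃ L k, K = L ++ [k] ∧ 0 < k := by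
  obtain ⟨L, k, rfl⟩ := List.eq_nil_or_concat' K |>.resolve_left (ne_nil_of_mem_coars hD hK)
  exact ⟨L, k, rfl, pos_of_mem_coars hpos hK k (by simp)⟩

theorem sum_coars_append_singleton {M : Type*} [AddCommMonoid M] (f : List ℕ → M)
    {D : List ℕ} (hD : D ≠ []) (hpos : ∀ d ∈ D, 0 < d) (a : ℕ) :
    ∑ J ∈ coars (D ++ [a]), f J =
      ∑ K ∈ coars D, f (K ++ [a]) + ∑ K ∈ coars D, f (K.modifyLast (· + a)) := by
  have hsnoc := fun {K} (hK : K ∈ coars D) =>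
    exists_eq_append_singleton_pos_of_mem_coars hD hpos hK
  rw [coars_append_singleton hD, Finset.sum_union, Finset.sum_image, Finset.sum_image]
  · intro K hK L hL h
    obtain ⟨K, k, rfl, -⟩ := hsnoc hK
    obtain ⟨L, l, rfl, -⟩ := hsnoc hL
    simp only [List.modifyLast_concat] at h
    obtain ⟨rfl, h⟩ := List.append_inj' h rfl
    simp_all
  · exact fun K _ L _ h => List.append_cancel_right h
  · rw [Finset.disjoint_left]
    simp only [Finset.mem_image, not_exists, not_and]
    rintro _ ⟨K, -, rfl⟩ L hL h
    obtain ⟨L, l, rfl, hl⟩ := hsnoc hL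
    rw [List.modifyLast_concat] at h
    have := (List.append_inj' h rfl).2
    simp at this
    omega

theorem ofMS_add (m n : Multiset (List ℕ)) : ofMS (m + n) = ofMS m + ofMS n := by
  simp [ofMS]

theorem ofMS_singleton (A : List ℕ) : ofMS {A} = sElem A := by simp [ofMS]

theorem fmul_sElem_left (A : List ℕ) (y : F2D) :
    fmul (sElem A) y = Finsupp.linearCombination (ZMod 2) (fun J => ofMS (osp A J)) y := by
  simp [fmul, sElem, Finsupp.linearCombination_apply]

theorem fmul_sElem_chiS (A B : List ℕ) :
    fmul (sElem A) (chiS B) = ∑ J ∈ coars B.reverse, ofMS (osp A J) := by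
  rw [fmul_sElem_left, chiS, map_sum]
  simp [sElem]

theorem fmul_sElem_chiS_nil (A : List ℕ) : fmul (sElem A) (chiS []) = sElem A := by
  simp [fmul_sElem_chiS, coars, osp_nil_right, ofMS_singleton]

/-- The terms of `S_A · Σ_{J ∈ C(D)} S_J` whose last entry is the last entry of `J` on its own. -/
noncomputable def lastBlockPart (A D : List ℕ) : F2D :=
  ∑ J ∈ coars D, ofMS ((osp A J.dropLast).map (· ++ [J.getLastD 0]))

theorem sum_coars_osp_nil {D : List ℕ} (hD : D ≠ []) :
    ∑ J ∈ coars D, ofMS (osp [] J) = lastBlockPart [] D := by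
  refine Finset.sum_congr rfl fun J hJ => ?_
  obtain ⟨L, k, rfl⟩ := List.eq_nil_or_concat' J |>.resolve_left (ne_nil_of_mem_coars hD hJ)
  simp [osp_nil_left]

theorem lastBlockPart_singleton (A : List ℕ) (a : ℕ) :
    lastBlockPart A [a] = sElem (A ++ [a]) := by
  simp [lastBlockPart, coars, osp_nil_right, ofMS_singleton]

theorem sum_coars_osp_append_singleton (A : List ℕ) (a : ℕ) {D : List ℕ} (hD : D ≠ [])
    (hpos : ∀ d ∈ D, 0 < d) :
    ∑ J ∈ coars D, ofMS (osp (A ++ [a]) J) =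
      lastBlockPart (A ++ [a]) D + lastBlockPart A (D ++ [a]) := by
  rw [lastBlockPart, lastBlockPart, sum_coars_append_singleton _ hD hpos,
    ← Finset.sum_add_distrib, ← Finset.sum_add_distrib]
  refine Finset.sum_congr rfl fun J hJ => ?_
  obtain ⟨L, k, rfl, -⟩ := exists_eq_append_singleton_pos_of_mem_coars hD hpos hJ
  simp only [osp_append_singleton, ofMS_add, List.dropLast_concat, List.getLastD_concat,
    List.modifyLast_concat, add_comm a k]
  abel

theorem List.reverse_drop_eq_append_getElem {α : Type*} (l : List α) {k : ℕ}
    (hk : k < l.length) : (l.drop k).reverse = (l.drop (k + 1)).reverse ++ [l[k]] := by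
  rw [List.drop_eq_getElem_cons hk, List.reverse_cons]

theorem Finset.sum_range_eq_sum_add_sum_of_eq_add_prev {M : Type*} [AddCommMonoid M]
    (q e : ℕ → M) (m : ℕ) (h_zero : q 0 = e 0) (h_succ : ∀ k < m, q (k + 1) = e (k + 1) + e k)
    (h_last : q (m + 1) = e m) :
    ∑ k ∈ range (m + 1 + 1), q k = ∑ k ∈ range (m + 1), e k + ∑ k ∈ range (m + 1), e k := by
  rw [sum_range_succ, sum_range_succ', sum_congr rfl fun k hk => h_succ k (mem_range.1 hk),
    sum_add_distrib, h_zero, h_last]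
  conv_rhs => arg 1; rw [sum_range_succ']
  conv_rhs => arg 2; rw [sum_range_succ]
  abel

/-- `χ'(S_I) := Σ_{I' ∈ C(I⁻¹)} S_{I'}` satisfies the defining equation of the
conjugation (antipode) of the mod 2 dual Leibniz--Hopf algebra: for every
nonempty sequence `I = (i_1,…,i_n)` of positive integers,
`Σ_{k=0}^{n} S_{(i_1,…,i_k)} · χ'(S_{(i_{k+1},…,i_n)}) = 0` in `𝓕₂*`. -/
theorem chiS_antipode (I : List ℕ) (hI : I ≠ []) (hpos : ∀ i ∈ I, 0 < i) :
    ∑ k ∈ Finset.range (I.length + 1),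
      fmul (sElem (I.take k)) (chiS (I.drop k)) = 0 := by
  obtain ⟨m, hm⟩ := Nat.exists_eq_add_one_of_ne_zero (List.length_pos_iff.2 hI).ne'
  have hpos_drop : ∀ k, ∀ d ∈ (I.drop k).reverse, 0 < d := fun k d hd =>
    hpos d (List.mem_of_mem_drop (List.mem_reverse.1 hd))
  rw [hm, Finset.sum_range_eq_sum_add_sum_of_eq_add_prev _
    (fun k => lastBlockPart (I.take k) (I.drop k).reverse) m, ZModModule.add_self]
  · rw [fmul_sElem_chiS, List.take_zero, List.drop_zero,
      sum_coars_osp_nil (List.reverse_ne_nil_iff.2 hI)]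
  · intro k hk
    have hk' : k + 1 < I.length := by omega
    rw [fmul_sElem_chiS, List.take_succ_eq_append_getElem (by omega),
      I.reverse_drop_eq_append_getElem (k := k) (by omega),
      sum_coars_osp_append_singleton _ _ (by simpa using hk') (hpos_drop (k + 1))]
  · rw [I.reverse_drop_eq_append_getElem (by omega), List.drop_eq_nil_of_le (by omega),
      List.reverse_nil, List.nil_append, lastBlockPart_singleton,
      ← List.take_succ_eq_append_getElem (by omega), ← hm, List.take_length, fmul_sElem_chiS_nil]
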